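/- For a positive integer j, the inequality j/√3 < (j+1)/2 holds if and only if j ≤ 6. Consequently the set A_c := (0, 1/2] ∪ ⋃_{k=1}^{6} [k/√3, (k+1)/2] is a union of nondegenerate intervals, and for A > 0, the open interval (√3·A, 2A) contains no positive integer if and only if A ∈ A_c. -/

import Mathlib

open Set

noncomputable def Ac : Set ℝ :=
  Ioc 0 (1 / 2) ∪ ⋃ k ∈ Finset.Icc (1 : ℕ) 6, Icc ((k : ℝ) / Real.sqrt 3) (((k : ℝ) + 1) / 2)

/-! For `A > 0`, the largest integer below `2A` is `k = ⌈2A⌉ - 1`, so `(√3 A, 2A)` misses the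
positive integers exactly when `2A ≤ 1` or `k ≤ √3 A`, i.e. `A ∈ [k/√3, (k+1)/2]`. Such an
interval is nonempty iff `4k² ≤ 3(k+1)²`, i.e. `k ≤ 6`, since `k² - 6k - 3` changes sign
between `6` and `7`. -/

lemma four_mul_sq_lt_three_mul_succ_sq_iff (j : ℕ) : 4 * j ^ 2 < 3 * (j + 1) ^ 2 ↔ j ≤ 6 := by
  constructor
  · intro h
    by_contra! hj
    nlinarith
  · intro hj
    interval_cases j <;> norm_num

lemma four_mul_sq_le_three_mul_succ_sq_iff (j : ℕ) : 4 * j ^ 2 ≤ 3 * (j + 1) ^ 2 ↔ j ≤ 6 := by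
  constructor
  · intro h
    by_contra! hj
    nlinarith
  · intro hj
    interval_cases j <;> norm_num

lemma natCast_div_sqrt_three_lt_iff (j : ℕ) :
    (j : ℝ) / Real.sqrt 3 < ((j : ℝ) + 1) / 2 ↔ j ≤ 6 := by
  rw [div_lt_div_iff₀ (by positivity) two_pos, ← sq_lt_sq₀ (by positivity) (by positivity),
    mul_pow, mul_pow, Real.sq_sqrt zero_le_three, ← four_mul_sq_lt_three_mul_succ_sq_iff,
    ← Nat.cast_lt (α := ℝ)]
  push_cast
  constructor <;> intro h <;> linarith

lemma natCast_div_sqrt_three_le_iff (j : ℕ) :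
    (j : ℝ) / Real.sqrt 3 ≤ ((j : ℝ) + 1) / 2 ↔ j ≤ 6 := by
  rw [div_le_div_iff₀ (by positivity) two_pos, ← sq_le_sq₀ (by positivity) (by positivity),
    mul_pow, mul_pow, Real.sq_sqrt zero_le_three, ← four_mul_sq_le_three_mul_succ_sq_iff,
    ← Nat.cast_le (α := ℝ)]
  push_cast
  constructor <;> intro h <;> linarith

lemma not_exists_nat_mem_Ioo_iff (x y : ℝ) :
    (¬ ∃ j : ℕ, 1 ≤ j ∧ x < j ∧ (j : ℝ) < y) ↔
      y ≤ 1 ∨ ∃ k : ℕ, 1 ≤ k ∧ (k : ℝ) ≤ x ∧ y ≤ k + 1 := by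
  constructor
  · intro h
    refine or_iff_not_imp_left.2 fun hy => ?_
    push Not at hy
    have hy1 : 1 < ⌈y⌉₊ := Nat.lt_ceil.2 (by exact_mod_cast hy)
    obtain ⟨k, hk⟩ : ∃ k, ⌈y⌉₊ = k + 1 := ⟨⌈y⌉₊ - 1, by omega⟩
    have hk1 : 1 ≤ k := by omega
    have hky : (k : ℝ) < y := by
      simpa [hk] using Nat.ceil_lt_add_one (by linarith : (0 : ℝ) ≤ y)
    refine ⟨k, hk1, ?_, by exact_mod_cast hk ▸ Nat.le_ceil y⟩
    by_contra! hxk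
    exact h ⟨k, hk1, hxk, hky⟩
  · rintro (hy | ⟨k, -, hkx, hyk⟩) ⟨j, hj, hxj, hjy⟩
    · have : (1 : ℝ) ≤ j := by exact_mod_cast hj
      linarith
    · have hkj : k + 1 ≤ j := by exact_mod_cast (hkx.trans_lt hxj)
      have : (k : ℝ) + 1 ≤ j := by exact_mod_cast hkj
      linarith

lemma mem_Ac_iff {A : ℝ} (hA : 0 < A) :
    A ∈ Ac ↔ 2 * A ≤ 1 ∨ ∃ k : ℕ, 1 ≤ k ∧ (k : ℝ) ≤ Real.sqrt 3 * A ∧ 2 * A ≤ k + 1 := by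
  have hs : 0 < Real.sqrt 3 := by positivity
  simp only [Ac, mem_union, mem_Ioc, mem_iUnion, Finset.mem_Icc, mem_Icc, exists_prop,
    div_le_iff₀ hs, le_div_iff₀ (two_pos : (0 : ℝ) < 2)]
  constructor
  · rintro (⟨-, hA⟩ | ⟨k, ⟨hk1, -⟩, hkA, hAk⟩)
    · exact Or.inl (by linarith)
    · exact Or.inr ⟨k, hk1, by linarith, by linarith⟩
  · rintro (hA2 | ⟨k, hk1, hkA, hAk⟩)
    · exact Or.inl ⟨hA, by linarith⟩
    · have hk6 : k ≤ 6 := (natCast_div_sqrt_three_le_iff k).1 <| by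
        rw [div_le_iff₀ hs]; nlinarith
      exact Or.inr ⟨k, ⟨hk1, hk6⟩, by linarith, by linarith⟩

/-- `j/√3 < (j+1)/2` iff `j ≤ 6` (so the intervals of `A_c` are nondegenerate), and
for `A > 0` the interval `(√3 A, 2A)` contains no positive integer iff `A ∈ A_c`. -/
theorem stmt10 :
    (∀ j : ℕ, 1 ≤ j → ((j : ℝ) / Real.sqrt 3 < ((j : ℝ) + 1) / 2 ↔ j ≤ 6)) ∧
    (∀ k ∈ Finset.Icc (1 : ℕ) 6, (k : ℝ) / Real.sqrt 3 < ((k : ℝ) + 1) / 2) ∧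
    (∀ A : ℝ, 0 < A →
      ((¬ ∃ j : ℕ, 1 ≤ j ∧ Real.sqrt 3 * A < (j : ℝ) ∧ (j : ℝ) < 2 * A) ↔ A ∈ Ac)) := by
  refine ⟨fun j _ => natCast_div_sqrt_three_lt_iff j, fun k hk => ?_, fun A hA => ?_⟩
  · exact (natCast_div_sqrt_three_lt_iff k).2 (Finset.mem_Icc.1 hk).2
  · exact (not_exists_nat_mem_Ioo_iff _ _).trans (mem_Ac_iff hA).symm
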